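/- arXiv:1911.02540 — 2 statements merged into one kernel-verified Lean document; each statement's English description precedes it below -/
import Mathlib

section
/- Let S ⊆ ℕ be a finite set with 0 ∈ S and let ε be a real number with 0 < ε < 1. Then (1/π)·∫₀^{1−ε} √(E_S(t))/g_S(t) dt ≤ (1/(2π))·(log(2/ε) + 4/√ε − 4). (The left-hand side is the expected number of real zeros of the associated random polynomial in the interval (0, 1−ε).) -/
open Real Finset

/-- `g_S(t) = ∑_{e ∈ S} t^(2e)`. -/
noncomputable def gS (S : Finset ℕ) (t : ℝ) : ℝ := ∑ e ∈ S, t ^ (2 * e)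

/-- `h_S(t) = ∑_{e ∈ S} e² t^(2e-2)` (the term for `e = 0` being `0`). -/
noncomputable def hS (S : Finset ℕ) (t : ℝ) : ℝ := ∑ e ∈ S, (e : ℝ) ^ 2 * t ^ (2 * e - 2)

/-- `q_S(t) = ∑_{e ∈ S} e t^(2e-1)` (the term for `e = 0` being `0`). -/
noncomputable def qS (S : Finset ℕ) (t : ℝ) : ℝ := ∑ e ∈ S, (e : ℝ) * t ^ (2 * e - 1)

/-- `E_S(t) = g_S(t) h_S(t) - q_S(t)²`. -/
noncomputable def ES (S : Finset ℕ) (t : ℝ) : ℝ := gS S t * hS S t - qS S t ^ 2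

/-- The expected number of real zeros in `(0,1)`, given by the Edelman–Kostlan integral. -/
noncomputable def zS (S : Finset ℕ) : ℝ :=
  (1 / Real.pi) * ∫ t in (0 : ℝ)..1, Real.sqrt (ES S t) / gS S t

lemma key_identity (n : ℕ) (s : ℝ) :
    (1 - s) ^ 3 * ∑ k ∈ Finset.range n, ((k : ℝ) + 1) ^ 2 * s ^ k
      = 1 + s - s ^ n * (((n : ℝ) * s - n - 1) ^ 2 + s) := by
  induction n with
  | zero => simp
  | succ n ih =>
    rw [Finset.sum_range_succ, mul_add, ih]
    push_cast
    ring

lemma sum_le_aux (n : ℕ) (s : ℝ) (hs : 0 ≤ s) :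
    (1 - s) ^ 3 * ∑ k ∈ Finset.range n, ((k : ℝ) + 1) ^ 2 * s ^ k ≤ 1 + s := by
  rw [key_identity]
  have h1 : (0 : ℝ) ≤ s ^ n * (((n : ℝ) * s - n - 1) ^ 2 + s) := by positivity
  linarith

lemma one_le_gS (S : Finset ℕ) (h0 : 0 ∈ S) (t : ℝ) : 1 ≤ gS S t := by
  have : (1 : ℝ) = t ^ (2 * 0) := by simp
  rw [this, gS]
  refine Finset.single_le_sum (f := fun e => t ^ (2 * e)) (fun e _ => ?_) h0
  have h2 : t ^ (2 * e) = (t ^ e) ^ 2 := by rw [← pow_mul, mul_comm]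
  rw [h2]; positivity

lemma hS_nonneg (S : Finset ℕ) (t : ℝ) : 0 ≤ hS S t := by
  refine Finset.sum_nonneg fun e _ => ?_
  have h2 : 2 * e - 2 = (e - 1) * 2 := by omega
  have h3 : t ^ (2 * e - 2) = (t ^ (e - 1)) ^ 2 := by rw [h2, pow_mul]
  rw [h3]; positivity

lemma hS_le (S : Finset ℕ) (t : ℝ) (ht0 : 0 ≤ t) (ht1 : t < 1) :
    hS S t ≤ 1 / (1 - t) ^ 3 := by
  obtain ⟨n, hn⟩ := S.exists_nat_subset_range
  have hsub : S ⊆ Finset.range (n + 1) :=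
    hn.trans (Finset.range_subset_range.2 (Nat.le_succ n))
  have hstep : hS S t ≤ ∑ e ∈ Finset.range (n + 1), (e : ℝ) ^ 2 * t ^ (2 * e - 2) := by
    refine Finset.sum_le_sum_of_subset_of_nonneg hsub fun e _ _ => ?_
    have h2 : 2 * e - 2 = (e - 1) * 2 := by omega
    have h3 : t ^ (2 * e - 2) = (t ^ (e - 1)) ^ 2 := by rw [h2, pow_mul]
    rw [h3]; positivity
  have hshift : ∑ e ∈ Finset.range (n + 1), (e : ℝ) ^ 2 * t ^ (2 * e - 2)
      = ∑ k ∈ Finset.range n, ((k : ℝ) + 1) ^ 2 * (t ^ 2) ^ k := by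
    rw [Finset.sum_range_succ']
    simp only [Nat.cast_zero, Nat.cast_add, Nat.cast_one]
    rw [show ((0:ℝ)^2 * t ^ (2*0-2)) = 0 by norm_num, add_zero]
    refine Finset.sum_congr rfl fun k _ => ?_
    have h4 : 2 * (k + 1) - 2 = 2 * k := by omega
    rw [h4, pow_mul]
  have hs0 : (0:ℝ) ≤ t ^ 2 := by positivity
  have hkey := sum_le_aux n (t ^ 2) hs0
  -- (1 - t^2)^3 * B ≤ 1 + t^2, want hS ≤ 1/(1-t)^3
  have hu : (0:ℝ) < 1 - t := by linarith
  have hv : (0:ℝ) < 1 + t := by linarith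
  have hB : hS S t ≤ ∑ k ∈ Finset.range n, ((k : ℝ) + 1) ^ 2 * (t ^ 2) ^ k :=
    hstep.trans_eq hshift
  rw [le_div_iff₀ (by positivity)]
  have hexp : (1 - t^2)^3 = (1-t)^3 * (1+t)^3 := by ring
  have h1t : (1:ℝ) + t^2 ≤ (1 + t)^3 := by nlinarith
  have hBnn : 0 ≤ ∑ k ∈ Finset.range n, ((k : ℝ) + 1) ^ 2 * (t ^ 2) ^ k := by
    refine Finset.sum_nonneg fun k _ => by positivity
  nlinarith [mul_le_mul_of_nonneg_left hkey (le_of_lt (pow_pos hv 3)),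
    mul_le_mul_of_nonneg_right hB (le_of_lt (pow_pos hu 3)),
    pow_pos hv 3, pow_pos hu 3, mul_nonneg hBnn (le_of_lt (pow_pos hu 3))]

lemma pointwise_bound (S : Finset ℕ) (h0 : 0 ∈ S) (t : ℝ) (ht0 : 0 ≤ t) (ht1 : t < 1) :
    Real.sqrt (ES S t) / gS S t ≤ (1 - t) ^ (-(3/2) : ℝ) := by
  have hg1 : 1 ≤ gS S t := one_le_gS S h0 t
  have hg0 : 0 < gS S t := lt_of_lt_of_le one_pos hg1
  have hh0 : 0 ≤ hS S t := hS_nonneg S t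
  have hE : ES S t ≤ gS S t ^ 2 * hS S t := by
    have h1 : gS S t * hS S t ≤ gS S t ^ 2 * hS S t := by
      nlinarith [mul_nonneg (mul_nonneg hg0.le hh0) (sub_nonneg.2 hg1)]
    have h2 : ES S t ≤ gS S t * hS S t := by
      rw [ES]; nlinarith [sq_nonneg (qS S t)]
    linarith
  have hsqrt : Real.sqrt (ES S t) ≤ gS S t * Real.sqrt (hS S t) := by
    calc Real.sqrt (ES S t) ≤ Real.sqrt (gS S t ^ 2 * hS S t) := Real.sqrt_le_sqrt hE
    _ = gS S t * Real.sqrt (hS S t) := by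
        rw [Real.sqrt_mul (by positivity), Real.sqrt_sq hg0.le]
  have hstep : Real.sqrt (ES S t) / gS S t ≤ Real.sqrt (hS S t) := by
    rw [div_le_iff₀ hg0, mul_comm]
    exact hsqrt
  have hu : (0:ℝ) < 1 - t := by linarith
  have hfin : Real.sqrt (hS S t) ≤ (1 - t) ^ (-(3/2) : ℝ) := by
    calc Real.sqrt (hS S t) ≤ Real.sqrt (1 / (1 - t) ^ 3) :=
          Real.sqrt_le_sqrt (hS_le S t ht0 ht1)
    _ = (1 - t) ^ (-(3/2) : ℝ) := by
        rw [Real.sqrt_eq_rpow, one_div, ← Real.rpow_natCast (1 - t) 3,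
          ← Real.rpow_neg hu.le, ← Real.rpow_mul hu.le]
        norm_num
  exact hstep.trans hfin

lemma continuous_integrand (S : Finset ℕ) (h0 : 0 ∈ S) :
    Continuous (fun t => Real.sqrt (ES S t) / gS S t) := by
  have hg : Continuous (gS S) := by
    unfold gS
    exact continuous_finset_sum _ fun e _ => continuous_pow _
  have hh : Continuous (hS S) := by
    unfold hS
    exact continuous_finset_sum _ fun e _ => (continuous_const.mul (continuous_pow _))
  have hq : Continuous (qS S) := by
    unfold qS
    exact continuous_finset_sum _ fun e _ => (continuous_const.mul (continuous_pow _))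
  have hE : Continuous (ES S) := by
    unfold ES
    exact (hg.mul hh).sub (hq.pow 2)
  exact (Real.continuous_sqrt.comp hE).div hg fun t =>
    ne_of_gt (lt_of_lt_of_le one_pos (one_le_gS S h0 t))

theorem stmt2 (S : Finset ℕ) (h0 : 0 ∈ S) (ε : ℝ) (hε : 0 < ε) (hε1 : ε < 1) :
    (1 / Real.pi) * ∫ t in (0 : ℝ)..(1 - ε), Real.sqrt (ES S t) / gS S t ≤
      (1 / (2 * Real.pi)) * (Real.log (2 / ε) + 4 / Real.sqrt ε - 4) := by
  have hab : (0:ℝ) ≤ 1 - ε := by linarith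
  have hsε : 0 < Real.sqrt ε := Real.sqrt_pos.2 hε
  -- integrability of both functions on [0, 1-ε]
  have hint1 : IntervalIntegrable (fun t => Real.sqrt (ES S t) / gS S t)
      MeasureTheory.volume 0 (1 - ε) :=
    (continuous_integrand S h0).intervalIntegrable _ _
  have hcont2 : ContinuousOn (fun t : ℝ => (1 - t) ^ (-(3/2) : ℝ)) (Set.uIcc 0 (1 - ε)) := by
    refine ContinuousOn.rpow_const (by fun_prop) fun x hx => ?_
    left
    rw [Set.uIcc_of_le hab] at hx
    have : x ≤ 1 - ε := hx.2
    intro h; nlinarith [h]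
  have hint2 : IntervalIntegrable (fun t : ℝ => (1 - t) ^ (-(3/2) : ℝ))
      MeasureTheory.volume 0 (1 - ε) := hcont2.intervalIntegrable
  -- monotonicity
  have hmono : (∫ t in (0:ℝ)..(1 - ε), Real.sqrt (ES S t) / gS S t)
      ≤ ∫ t in (0:ℝ)..(1 - ε), (1 - t) ^ (-(3/2) : ℝ) := by
    refine intervalIntegral.integral_mono_on hab hint1 hint2 fun x hx => ?_
    exact pointwise_bound S h0 x hx.1 (lt_of_le_of_lt hx.2 (by linarith))
  -- compute the right integral
  have hval : (∫ t in (0:ℝ)..(1 - ε), (1 - t) ^ (-(3/2) : ℝ)) = 2 / Real.sqrt ε - 2 := by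
    have hc := intervalIntegral.integral_comp_sub_left
      (a := (0:ℝ)) (b := 1 - ε) (fun u : ℝ => u ^ (-(3/2) : ℝ)) 1
    simp only [sub_zero, sub_sub_cancel] at hc
    rw [hc]
    rw [integral_rpow (Or.inr ⟨by norm_num, by
      rw [Set.uIcc_of_le hε1.le]
      intro h; exact absurd h.1 (by linarith)⟩)]
    have h1 : (1:ℝ) ^ (-(3/2) + 1 : ℝ) = 1 := Real.one_rpow _
    have h2 : ε ^ (-(3/2) + 1 : ℝ) = (Real.sqrt ε)⁻¹ := by
      rw [show (-(3/2) + 1 : ℝ) = -(1/2) by norm_num, Real.rpow_neg hε.le,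
        Real.sqrt_eq_rpow]
    rw [h1, h2]
    field_simp
    ring
  have hπ : 0 < Real.pi := Real.pi_pos
  have hlog : 0 ≤ Real.log (2 / ε) := by
    apply Real.log_nonneg
    rw [le_div_iff₀ hε]; linarith
  have key : (1 / Real.pi) * ∫ t in (0 : ℝ)..(1 - ε), Real.sqrt (ES S t) / gS S t
      ≤ (1 / Real.pi) * (2 / Real.sqrt ε - 2) := by
    apply mul_le_mul_of_nonneg_left _ (by positivity)
    rw [← hval]; exact hmono
  have heq : (1 / Real.pi) * (2 / Real.sqrt ε - 2)
      = (1 / (2 * Real.pi)) * (4 / Real.sqrt ε - 4) := by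
    field_simp; ring
  calc (1 / Real.pi) * ∫ t in (0 : ℝ)..(1 - ε), Real.sqrt (ES S t) / gS S t
      ≤ (1 / (2 * Real.pi)) * (4 / Real.sqrt ε - 4) := by rw [← heq]; exact key
    _ ≤ (1 / (2 * Real.pi)) * (Real.log (2 / ε) + 4 / Real.sqrt ε - 4) := by
        apply mul_le_mul_of_nonneg_left _ (by positivity)
        linarith
end

section
/- Let S ⊆ ℕ be a finite set with 0 ∈ S and |S| = k, and let a ∈ ℕ satisfy a > max S. Then z_{S ∪ {a}} ≤ z_S + (1/π)·arctan(1/√k). -/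
open Real Finset

/-!
Write `G = g_S(t)` and `x = t^(2a)`. Adding the top exponent `a` changes `E` by the identity
`G · E_{S ∪ {a}} = (G + x) · E_S + y²` with `y = t^(a-1) (a G - t q_S) ≥ 0` (as `a > max S`),
whence `√E_{S ∪ {a}} / (G + x) ≤ √E_S / G + y / (√G (G + x))`. The last term is the derivative
of `arctan (t^a / √G)`, which integrates over `[0, 1]` to `arctan (1 / √k)` because `g_S(1) = k`.
-/

lemma sqrt_div_le_of_mul_eq {G x E E' y : ℝ} (hG : 0 < G) (hx : 0 ≤ x) (hE : 0 ≤ E)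
    (hy : 0 ≤ y) (h : G * E' = (G + x) * E + y ^ 2) :
    √E' / (G + x) ≤ √E / G + y / (√G * (G + x)) := by
  have hGx : 0 < G + x := by linarith
  have hs : 0 < √G := sqrt_pos.2 hG
  have hsw : G ≤ √G * √(G + x) :=
    calc G = √G * √G := (mul_self_sqrt hG.le).symm
      _ ≤ √G * √(G + x) := by gcongr; linarith
  have key : √G * √E' ≤ √(G + x) * √E + y := by
    rw [← sqrt_mul hG.le, h, sqrt_le_iff]
    refine ⟨by positivity, ?_⟩
    rw [add_sq, mul_pow, sq_sqrt hGx.le, sq_sqrt hE]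
    nlinarith [mul_nonneg (mul_nonneg (sqrt_nonneg (G + x)) (sqrt_nonneg E)) hy]
  have hGx_sq : G + x = √(G + x) ^ 2 := (sq_sqrt hGx.le).symm
  calc √E' / (G + x) = √G * √E' / (√G * (G + x)) := by field_simp
    _ ≤ (√(G + x) * √E + y) / (√G * (G + x)) := by gcongr
    _ = √E / (√G * √(G + x)) + y / (√G * (G + x)) := by
        rw [add_div]; congr 1; nth_rw 2 [hGx_sq]; field_simp
    _ ≤ √E / G + y / (√G * (G + x)) := by gcongr

section

variable (S : Finset ℕ)

lemma gS_pos (h0 : 0 ∈ S) (t : ℝ) : 0 < gS S t :=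
  sum_pos' (fun e _ => (even_two_mul e).pow_nonneg t) ⟨0, h0, by simp⟩

lemma gS_one : gS S 1 = S.card := by simp [gS]

lemma gS_insert {a : ℕ} (haS : a ∉ S) (t : ℝ) : gS (insert a S) t = gS S t + t ^ (2 * a) := by
  rw [gS, sum_insert haS, add_comm, gS]

-- Cauchy–Schwarz for the vectors `(t ^ e)` and `(e * t ^ (e - 1))`.
lemma ES_nonneg (t : ℝ) : 0 ≤ ES S t := by
  have hcs := sum_mul_sq_le_sq_mul_sq S (fun e => t ^ e) (fun e => (e : ℝ) * t ^ (e - 1))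
  have hfg : ∀ e : ℕ, t ^ e * ((e : ℝ) * t ^ (e - 1)) = e * t ^ (2 * e - 1) := by
    rintro (_ | n)
    · simp
    · rw [show 2 * (n + 1) - 1 = (n + 1) + (n + 1 - 1) by omega, pow_add]; ring
  have hg : ∀ e : ℕ, ((e : ℝ) * t ^ (e - 1)) ^ 2 = e ^ 2 * t ^ (2 * e - 2) := by
    intro e; rw [mul_pow, ← pow_mul, show (e - 1) * 2 = 2 * e - 2 by omega]
  simp only [hfg, hg, ← pow_mul, mul_comm _ 2] at hcs
  rw [ES, gS, hS, qS]
  linarith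

lemma mul_qS (t : ℝ) : t * qS S t = ∑ e ∈ S, (e : ℝ) * t ^ (2 * e) := by
  rw [qS, mul_sum]
  refine sum_congr rfl fun e _ => ?_
  rcases e with _ | n
  · simp
  · rw [show 2 * (n + 1) = 2 * n + 1 + 1 by ring, pow_succ, Nat.add_sub_cancel]; ring

lemma mul_qS_le {a : ℕ} (hub : ∀ e ∈ S, e ≤ a) (t : ℝ) : t * qS S t ≤ a * gS S t := by
  rw [mul_qS, gS, mul_sum]
  exact sum_le_sum fun e he =>
    mul_le_mul_of_nonneg_right (by exact_mod_cast hub e he) ((even_two_mul e).pow_nonneg t)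

lemma ES_insert {a : ℕ} (haS : a ∉ S) (ha : 1 ≤ a) (t : ℝ) :
    gS S t * ES (insert a S) t =
      gS (insert a S) t * ES S t + (t ^ (a - 1) * (a * gS S t - t * qS S t)) ^ 2 := by
  obtain ⟨b, rfl⟩ : ∃ b, a = b + 1 := ⟨a - 1, by omega⟩
  simp only [ES, gS, hS, qS, sum_insert haS, show 2 * (b + 1) - 2 = 2 * b by omega,
    show 2 * (b + 1) - 1 = 2 * b + 1 by omega, Nat.add_sub_cancel]
  ring

lemma continuous_gS : Continuous (gS S) := by
  unfold gS; fun_prop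

lemma continuous_ES : Continuous (ES S) := by
  unfold ES gS hS qS; fun_prop

lemma hasDerivAt_gS (t : ℝ) : HasDerivAt (gS S) (2 * qS S t) t := by
  have h : HasDerivAt (fun t : ℝ => ∑ e ∈ S, t ^ (2 * e))
      (∑ e ∈ S, ((2 * e : ℕ) : ℝ) * t ^ (2 * e - 1)) t :=
    HasDerivAt.fun_sum fun e _ => hasDerivAt_pow (2 * e) t
  refine h.congr_deriv ?_
  rw [qS, mul_sum]
  exact sum_congr rfl fun e _ => by push_cast; ring

end

noncomputable def insertAngle (S : Finset ℕ) (a : ℕ) (t : ℝ) : ℝ :=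
  arctan (t ^ a / √(gS S t))

noncomputable def insertAngleDeriv (S : Finset ℕ) (a : ℕ) (t : ℝ) : ℝ :=
  t ^ (a - 1) * (a * gS S t - t * qS S t) / (√(gS S t) * (gS S t + t ^ (2 * a)))

section

variable {S : Finset ℕ} (h0 : 0 ∈ S) {a : ℕ}
include h0

lemma hasDerivAt_insertAngle (ha : 1 ≤ a) (t : ℝ) :
    HasDerivAt (insertAngle S a) (insertAngleDeriv S a t) t := by
  have hG := gS_pos S h0 t
  have hs : 0 < √(gS S t) := sqrt_pos.2 hG
  have hsqrt := (hasDerivAt_gS S t).sqrt hG.ne'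
  refine ((hasDerivAt_pow a t).fun_div hsqrt hs.ne').arctan.congr_deriv ?_
  obtain ⟨b, rfl⟩ : ∃ b, a = b + 1 := ⟨a - 1, by omega⟩
  rw [insertAngleDeriv, Nat.add_sub_cancel, mul_comm 2, pow_mul]
  have hss : √(gS S t) ^ 2 = gS S t := sq_sqrt hG.le
  set s := √(gS S t)
  rw [← hss]
  have : s ^ 2 + (t ^ (b + 1)) ^ 2 ≠ 0 := by positivity
  field_simp
  ring

lemma continuous_insertAngleDeriv : Continuous (insertAngleDeriv S a) := by
  refine Continuous.div (by unfold gS qS; fun_prop) (by unfold gS; fun_prop) fun t => ?_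
  have := gS_pos S h0 t
  have := (even_two_mul a).pow_nonneg t
  positivity

lemma integral_insertAngleDeriv (ha : 1 ≤ a) :
    ∫ t in (0 : ℝ)..1, insertAngleDeriv S a t = arctan (1 / √S.card) := by
  rw [intervalIntegral.integral_eq_sub_of_hasDerivAt (fun t _ => hasDerivAt_insertAngle h0 ha t)
    ((continuous_insertAngleDeriv h0).intervalIntegrable 0 1)]
  simp [insertAngle, gS_one, zero_pow (by omega : a ≠ 0)]

end

lemma sqrt_ES_insert_div_le {S : Finset ℕ} (h0 : 0 ∈ S) {a : ℕ} (haS : a ∉ S) (ha : 1 ≤ a)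
    (hub : ∀ e ∈ S, e ≤ a) {t : ℝ} (ht : 0 ≤ t) :
    √(ES (insert a S) t) / gS (insert a S) t ≤
      √(ES S t) / gS S t + insertAngleDeriv S a t := by
  have hE := ES_insert S haS ha t
  rw [gS_insert S haS] at hE ⊢
  exact sqrt_div_le_of_mul_eq (gS_pos S h0 t) ((even_two_mul a).pow_nonneg t) (ES_nonneg S t)
    (mul_nonneg (pow_nonneg ht _) (sub_nonneg.2 (mul_qS_le S hub t))) hE

lemma continuous_sqrt_ES_div_gS {S : Finset ℕ} (h0 : 0 ∈ S) :
    Continuous fun t => √(ES S t) / gS S t :=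
  (continuous_ES S).sqrt.div (continuous_gS S) fun t => (gS_pos S h0 t).ne'

theorem stmt10 (S : Finset ℕ) (k : ℕ) (h0 : 0 ∈ S) (hcard : S.card = k)
    (a : ℕ) (ha : S.max' ⟨0, h0⟩ < a) :
    zS (insert a S) ≤ zS S + (1 / Real.pi) * Real.arctan (1 / Real.sqrt k) := by
  have hlt : ∀ e ∈ S, e < a := fun e he => (S.le_max' e he).trans_lt ha
  have haS : a ∉ S := fun h => (hlt a h).false
  have ha1 : 1 ≤ a := hlt 0 h0
  have hmono : ∫ t in (0 : ℝ)..1, √(ES (insert a S) t) / gS (insert a S) t ≤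
      ∫ t in (0 : ℝ)..1, (√(ES S t) / gS S t + insertAngleDeriv S a t) :=
    intervalIntegral.integral_mono_on zero_le_one
      ((continuous_sqrt_ES_div_gS (mem_insert_of_mem h0)).intervalIntegrable 0 1)
      (((continuous_sqrt_ES_div_gS h0).add (continuous_insertAngleDeriv h0)).intervalIntegrable 0 1)
      fun t ht => sqrt_ES_insert_div_le h0 haS ha1 (fun e he => (hlt e he).le) ht.1
  rw [intervalIntegral.integral_add ((continuous_sqrt_ES_div_gS h0).intervalIntegrable 0 1)
    ((continuous_insertAngleDeriv h0).intervalIntegrable 0 1), integral_insertAngleDeriv h0 ha1,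
    hcard] at hmono
  have := mul_le_mul_of_nonneg_left hmono (by positivity : 0 ≤ 1 / π)
  rw [zS, zS]
  linarith
end
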